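/- arXiv:2406.02343 — 4 statements merged into one kernel-verified Lean document; each statement's English description precedes it below -/
import Mathlib

section
/- Let W ∈ ℝ^{n×n} be symmetric with nonnegative entries and positive row sums, D the diagonal matrix of row sums, S = D^{-1/2} W D^{-1/2}, and 𝕊̄ = (S ⊗ I + I ⊗ S)/2. Fix μ > 0, set α = 1/(1+μ), and let E ∈ ℝ^{n×n}. Then the function J(F) = vec(F)ᵀ(𝕀 - 𝕊̄)vec(F) + μ‖F - E‖_F² on ℝ^{n×n} is strictly convex: for all F ≠ G and t ∈ (0,1), J(tF + (1-t)G) < t J(F) + (1-t) J(G). -/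
open Matrix Kronecker

/-- The symmetrically normalized matrix `S = D^{-1/2} W D^{-1/2}`. -/
noncomputable def normMat (n : ℕ) (W : Matrix (Fin n) (Fin n) ℝ) :
    Matrix (Fin n) (Fin n) ℝ :=
  (Matrix.diagonal fun i => (Real.sqrt (∑ j, W i j))⁻¹) * W *
    (Matrix.diagonal fun i => (Real.sqrt (∑ j, W i j))⁻¹)

/-- The mean Kronecker product `𝕊̄ = (S ⊗ I + I ⊗ S)/2`. -/
noncomputable def meanKron (n : ℕ) (W : Matrix (Fin n) (Fin n) ℝ) :
    Matrix (Fin n × Fin n) (Fin n × Fin n) ℝ :=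
  (2 : ℝ)⁻¹ • (normMat n W ⊗ₖ (1 : Matrix (Fin n) (Fin n) ℝ) +
    (1 : Matrix (Fin n) (Fin n) ℝ) ⊗ₖ normMat n W)

/-- The vectorization `vec(F)`, with `vec(F)_(i,k) = F k i` (columns stacked). -/
def vecM (n : ℕ) (F : Matrix (Fin n) (Fin n) ℝ) : Fin n × Fin n → ℝ :=
  fun p => F p.2 p.1

/-- The objective `J(F) = vec(F)ᵀ(𝕀 - 𝕊̄)vec(F) + μ‖F - E‖_F²`. -/
noncomputable def objJ (n : ℕ) (W : Matrix (Fin n) (Fin n) ℝ) (μ : ℝ)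
    (E : Matrix (Fin n) (Fin n) ℝ) (F : Matrix (Fin n) (Fin n) ℝ) : ℝ :=
  vecM n F ⬝ᵥ (((1 : Matrix (Fin n × Fin n) (Fin n × Fin n) ℝ) - meanKron n W).mulVec
    (vecM n F)) + μ * ∑ i, ∑ j, (F i j - E i j) ^ 2


lemma normMat_quad_le (n : ℕ) (W : Matrix (Fin n) (Fin n) ℝ) (hsym : Wᵀ = W)
    (hW : ∀ i j, 0 ≤ W i j) (hrow : ∀ i, 0 < ∑ j, W i j) (x : Fin n → ℝ) :
    x ⬝ᵥ (normMat n W).mulVec x ≤ x ⬝ᵥ x := by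
  set s : Fin n → ℝ := fun i => Real.sqrt (∑ j, W i j) with hsdef
  have hspos : ∀ i, 0 < s i := fun i => Real.sqrt_pos.mpr (hrow i)
  have hss : ∀ i, s i * s i = ∑ j, W i j := fun i => Real.mul_self_sqrt (hrow i).le
  have hWsym : ∀ i j, W i j = W j i := fun i j => by rw [← congrFun (congrFun hsym j) i, Matrix.transpose_apply]
  have A1 : ∑ i, ∑ j, W i j * (x i * (s i)⁻¹) ^ 2 = ∑ i, x i * x i := by
    refine Finset.sum_congr rfl fun i _ => ?_
    rw [← Finset.sum_mul, ← hss i]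
    have hne : s i ≠ 0 := (hspos i).ne'
    field_simp
  have A2 : ∑ i, ∑ j, W i j * (x j * (s j)⁻¹) ^ 2 = ∑ i, x i * x i := by
    rw [Finset.sum_comm]
    rw [show (∑ j, ∑ i, W i j * (x j * (s j)⁻¹) ^ 2)
        = ∑ j, ∑ i, W j i * (x j * (s j)⁻¹) ^ 2 from
      Finset.sum_congr rfl fun j _ => Finset.sum_congr rfl fun i _ => by rw [hWsym i j]]
    exact A1
  have A3 : x ⬝ᵥ (normMat n W).mulVec x
      = ∑ i, ∑ j, W i j * ((x i * (s i)⁻¹) * (x j * (s j)⁻¹)) := by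
    simp only [normMat, dotProduct, Matrix.mulVec, Matrix.mul_diagonal, Matrix.diagonal_mul,
      ← hsdef]
    refine Finset.sum_congr rfl fun i _ => ?_
    rw [Finset.mul_sum]
    refine Finset.sum_congr rfl fun j _ => ?_
    ring
  have expand : ∀ i j : Fin n, (2:ℝ)⁻¹ * (W i j * (x i * (s i)⁻¹ - x j * (s j)⁻¹) ^ 2)
      = (2:ℝ)⁻¹ * (W i j * (x i * (s i)⁻¹) ^ 2) + (2:ℝ)⁻¹ * (W i j * (x j * (s j)⁻¹) ^ 2)
        - W i j * ((x i * (s i)⁻¹) * (x j * (s j)⁻¹)) := fun i j => by ring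
  have key : x ⬝ᵥ x - x ⬝ᵥ (normMat n W).mulVec x
      = ∑ i, ∑ j, (2:ℝ)⁻¹ * (W i j * (x i * (s i)⁻¹ - x j * (s j)⁻¹) ^ 2) := by
    simp only [expand, Finset.sum_sub_distrib, Finset.sum_add_distrib, ← Finset.mul_sum]
    rw [A3]
    simp only [dotProduct]
    rw [A1, A2]
    ring
  have hnn : 0 ≤ ∑ i, ∑ j, (2:ℝ)⁻¹ * (W i j * (x i * (s i)⁻¹ - x j * (s j)⁻¹) ^ 2) := by
    refine Finset.sum_nonneg fun i _ => Finset.sum_nonneg fun j _ => ?_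
    have := mul_nonneg (hW i j) (sq_nonneg (x i * (s i)⁻¹ - x j * (s j)⁻¹))
    positivity
  linarith [key ▸ hnn]

lemma meanKron_quad_le (n : ℕ) (W : Matrix (Fin n) (Fin n) ℝ) (hsym : Wᵀ = W)
    (hW : ∀ i j, 0 ≤ W i j) (hrow : ∀ i, 0 < ∑ j, W i j) (v : Fin n × Fin n → ℝ) :
    v ⬝ᵥ (meanKron n W).mulVec v ≤ v ⬝ᵥ v := by
  set S := normMat n W with hS
  have h1 : v ⬝ᵥ (S ⊗ₖ (1 : Matrix (Fin n) (Fin n) ℝ)).mulVec v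
      = ∑ k, (fun i => v (i, k)) ⬝ᵥ S.mulVec (fun i => v (i, k)) := by
    simp only [dotProduct, Matrix.mulVec, Matrix.kroneckerMap_apply, Matrix.one_apply,
      Fintype.sum_prod_type, mul_ite, mul_one, mul_zero, ite_mul, zero_mul,
      Finset.sum_ite_eq, Finset.sum_ite_eq', Finset.mem_univ, if_true]
    rw [Finset.sum_comm]
  have h2 : v ⬝ᵥ ((1 : Matrix (Fin n) (Fin n) ℝ) ⊗ₖ S).mulVec v
      = ∑ i, (fun k => v (i, k)) ⬝ᵥ S.mulVec (fun k => v (i, k)) := by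
    simp only [dotProduct, Matrix.mulVec, Matrix.kroneckerMap_apply, Matrix.one_apply,
      Fintype.sum_prod_type, mul_ite, mul_one, mul_zero, ite_mul, zero_mul,
      Finset.sum_ite_eq, Finset.sum_ite_eq', Finset.mem_univ, if_true]
    refine Finset.sum_congr rfl fun i _ => Finset.sum_congr rfl fun k _ => ?_
    rw [Finset.sum_comm]
    simp [Finset.sum_ite_eq]
  have hvv : v ⬝ᵥ v = ∑ k, ∑ i, v (i, k) * v (i, k) := by
    simp only [dotProduct, Fintype.sum_prod_type]
    rw [Finset.sum_comm]
  have hvv' : v ⬝ᵥ v = ∑ i, ∑ k, v (i, k) * v (i, k) := by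
    simp only [dotProduct, Fintype.sum_prod_type]
  have b1 : v ⬝ᵥ (S ⊗ₖ (1 : Matrix (Fin n) (Fin n) ℝ)).mulVec v ≤ v ⬝ᵥ v := by
    rw [h1, hvv]
    exact Finset.sum_le_sum fun k _ =>
      normMat_quad_le n W hsym hW hrow (fun i => v (i, k))
  have b2 : v ⬝ᵥ ((1 : Matrix (Fin n) (Fin n) ℝ) ⊗ₖ S).mulVec v ≤ v ⬝ᵥ v := by
    rw [h2, hvv']
    exact Finset.sum_le_sum fun i _ =>
      normMat_quad_le n W hsym hW hrow (fun k => v (i, k))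
  have hq : v ⬝ᵥ (meanKron n W).mulVec v
      = (2:ℝ)⁻¹ * (v ⬝ᵥ (S ⊗ₖ (1 : Matrix (Fin n) (Fin n) ℝ)).mulVec v
        + v ⬝ᵥ ((1 : Matrix (Fin n) (Fin n) ℝ) ⊗ₖ S).mulVec v) := by
    rw [meanKron, ← hS, Matrix.smul_mulVec, Matrix.add_mulVec, dotProduct_smul,
      dotProduct_add]
    simp [smul_eq_mul]
  rw [hq]
  linarith

lemma quad_combo {ι : Type*} [Fintype ι] (M : Matrix ι ι ℝ) (x y : ι → ℝ) (t : ℝ) :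
    t * (x ⬝ᵥ M.mulVec x) + (1 - t) * (y ⬝ᵥ M.mulVec y)
      - ((t • x + (1 - t) • y) ⬝ᵥ M.mulVec (t • x + (1 - t) • y))
      = t * (1 - t) * ((x - y) ⬝ᵥ M.mulVec (x - y)) := by
  simp only [Matrix.mulVec_add, Matrix.mulVec_smul, Matrix.mulVec_sub, dotProduct_add,
    add_dotProduct, dotProduct_smul, smul_dotProduct, dotProduct_sub, sub_dotProduct,
    smul_eq_mul]
  ring

/-- For `W` symmetric with nonnegative entries and positive row sums and `μ > 0`, the
objective `J(F) = vec(F)ᵀ(𝕀 - 𝕊̄)vec(F) + μ‖F - E‖_F²` is strictly convex. -/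
theorem objective_strictly_convex (n : ℕ) (W : Matrix (Fin n) (Fin n) ℝ) (hsym : Wᵀ = W)
    (hW : ∀ i j, 0 ≤ W i j) (hrow : ∀ i, 0 < ∑ j, W i j)
    (μ : ℝ) (hμ : 0 < μ) (α : ℝ) (hα : α = 1 / (1 + μ)) (E : Matrix (Fin n) (Fin n) ℝ) :
    ∀ F G : Matrix (Fin n) (Fin n) ℝ, F ≠ G → ∀ t : ℝ, 0 < t → t < 1 →
      objJ n W μ E (t • F + (1 - t) • G) < t * objJ n W μ E F + (1 - t) * objJ n W μ E G := by
  intro F G hFG t ht ht1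
  set M := (1 : Matrix (Fin n × Fin n) (Fin n × Fin n) ℝ) - meanKron n W with hM
  have hvec : vecM n (t • F + (1 - t) • G) = t • vecM n F + (1 - t) • vecM n G := by
    funext p
    simp [vecM, Matrix.add_apply, Matrix.smul_apply, smul_eq_mul]
  have hvecsub : vecM n F - vecM n G = vecM n (F - G) := by
    funext p
    simp [vecM, Matrix.sub_apply]
  -- quadratic part gap
  have hquad := quad_combo M (vecM n F) (vecM n G) t
  -- Frobenius part gap
  have hfrob : t * (∑ i, ∑ j, (F i j - E i j) ^ 2) + (1 - t) * (∑ i, ∑ j, (G i j - E i j) ^ 2)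
      - (∑ i, ∑ j, ((t • F + (1 - t) • G) i j - E i j) ^ 2)
      = t * (1 - t) * ∑ i, ∑ j, (F i j - G i j) ^ 2 := by
    simp only [Finset.mul_sum, ← Finset.sum_add_distrib, ← Finset.sum_sub_distrib]
    refine Finset.sum_congr rfl fun i _ => Finset.sum_congr rfl fun j _ => ?_
    simp only [Matrix.add_apply, Matrix.smul_apply, smul_eq_mul]
    ring
  -- positivity of the gap
  have hd : vecM n (F - G) ⬝ᵥ M.mulVec (vecM n (F - G)) + μ * ∑ i, ∑ j, (F i j - G i j) ^ 2
      > 0 := by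
    have hq : 0 ≤ vecM n (F - G) ⬝ᵥ M.mulVec (vecM n (F - G)) := by
      have hle := meanKron_quad_le n W hsym hW hrow (vecM n (F - G))
      have : vecM n (F - G) ⬝ᵥ M.mulVec (vecM n (F - G))
          = vecM n (F - G) ⬝ᵥ vecM n (F - G)
            - vecM n (F - G) ⬝ᵥ (meanKron n W).mulVec (vecM n (F - G)) := by
        rw [hM, Matrix.sub_mulVec, dotProduct_sub, Matrix.one_mulVec]
      linarith [this ▸ sub_nonneg.mpr hle]
    have hsum : 0 < ∑ i, ∑ j, (F i j - G i j) ^ 2 := by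
      have hex : ∃ i j, F i j ≠ G i j := by
        by_contra h
        push_neg at h
        exact hFG (Matrix.ext h)
      obtain ⟨i, j, hij⟩ := hex
      have hij2 : 0 < (F i j - G i j) ^ 2 := by
        have h := sub_ne_zero.mpr hij
        exact lt_of_le_of_ne (sq_nonneg _) (Ne.symm (pow_ne_zero 2 h))
      refine Finset.sum_pos' (fun i _ => Finset.sum_nonneg fun j _ => sq_nonneg _)
        ⟨i, Finset.mem_univ i, Finset.sum_pos' (fun j _ => sq_nonneg _)
          ⟨j, Finset.mem_univ j, hij2⟩⟩
    nlinarith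
  have gap : t * objJ n W μ E F + (1 - t) * objJ n W μ E G
      - objJ n W μ E (t • F + (1 - t) • G)
      = t * (1 - t) * (vecM n (F - G) ⬝ᵥ M.mulVec (vecM n (F - G))
        + μ * ∑ i, ∑ j, (F i j - G i j) ^ 2) := by
    simp only [objJ, ← hM, hvec]
    rw [hvecsub] at hquad
    nlinarith [hquad, hfrob]
  have hpos : 0 < t * (1 - t) := mul_pos ht (by linarith)
  nlinarith [gap, mul_pos hpos hd]
end

section
/- Let n ≥ 1, let f, p ∈ ℝⁿ and r, β ∈ ℝ satisfy f_i ≥ 0 and 0 ≤ p_i ≤ r for all i, with r > 0 and β > 0. Define x̃ ∈ ℝⁿ by x̃_i = ((r p_i + 2β)/(r² + 2β)) f_i + (r Σ_{j=1}^n (r f_j - p_j f_j)) / (n(r² + 2β)). Then x̃ is feasible, i.e., x̃_i ≥ 0 for all i and Σ_{i=1}^n x̃_i = Σ_{i=1}^n f_i. -/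
/-- The closed-form solution `x̃` of the neighbor-guided smoothing problem is feasible:
it has nonnegative entries and the same entry sum as `f`. -/
theorem smoothing_solution_feasible (n : ℕ) (hn : 1 ≤ n)
    (f p : Fin n → ℝ) (r β : ℝ)
    (hf : ∀ i, 0 ≤ f i) (hp0 : ∀ i, 0 ≤ p i) (hpr : ∀ i, p i ≤ r)
    (hr : 0 < r) (hβ : 0 < β)
    (xt : Fin n → ℝ)
    (hxt : ∀ i, xt i = ((r * p i + 2 * β) / (r ^ 2 + 2 * β)) * f i +
      (r * ∑ j, (r * f j - p j * f j)) / (n * (r ^ 2 + 2 * β))) :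
    (∀ i, 0 ≤ xt i) ∧ ∑ i, xt i = ∑ i, f i := by
  have hD : (0:ℝ) < r ^ 2 + 2 * β := by positivity
  have hn' : (0:ℝ) < (n : ℝ) := by exact_mod_cast hn
  have hS : 0 ≤ ∑ j, (r * f j - p j * f j) := by
    apply Finset.sum_nonneg
    intro j _
    have : 0 ≤ (r - p j) * f j := mul_nonneg (by linarith [hpr j]) (hf j)
    linarith [this]
  constructor
  · intro i
    rw [hxt i]
    have h1 : 0 ≤ ((r * p i + 2 * β) / (r ^ 2 + 2 * β)) * f i := by
      apply mul_nonneg _ (hf i)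
      apply div_nonneg _ hD.le
      have := mul_nonneg hr.le (hp0 i)
      linarith
    have h2 : 0 ≤ (r * ∑ j, (r * f j - p j * f j)) / (n * (r ^ 2 + 2 * β)) := by
      apply div_nonneg (mul_nonneg hr.le hS) (by positivity)
    linarith
  · have key : ∀ i, xt i = (r * p i * f i + 2 * β * f i +
        (r * ∑ j, (r * f j - p j * f j)) / n) / (r ^ 2 + 2 * β) := by
      intro i
      rw [hxt i]
      field_simp
    calc ∑ i, xt i
        = (∑ i, (r * p i * f i + 2 * β * f i +
            (r * ∑ j, (r * f j - p j * f j)) / n)) / (r ^ 2 + 2 * β) := by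
          rw [Finset.sum_div]; exact Finset.sum_congr rfl fun i _ => key i
      _ = ∑ i, f i := by
          rw [Finset.sum_add_distrib, Finset.sum_const, Finset.card_univ,
            Fintype.card_fin, nsmul_eq_mul]
          rw [div_eq_iff hD.ne']
          have hc : (n:ℝ) * ((r * ∑ j, (r * f j - p j * f j)) / n) =
              ∑ j, r * (r * f j - p j * f j) := by
            rw [mul_comm, div_mul_cancel₀ _ hn'.ne', Finset.mul_sum]
          rw [hc, ← Finset.sum_add_distrib, Finset.sum_mul]
          exact Finset.sum_congr rfl fun i _ => by ring
end

section
/- Let n ≥ 1, let f, p ∈ ℝⁿ and r, β ∈ ℝ satisfy f_i ≥ 0 and 0 ≤ p_i ≤ r for all i, with r > 0 and β > 0. Define x̃ ∈ ℝⁿ by x̃_i = ((r p_i + 2β)/(r² + 2β)) f_i + (r Σ_{j=1}^n (r f_j - p_j f_j)) / (n(r² + 2β)). Then x̃ minimizes the objective (1/2)‖r x - p∘f‖₂² + β‖x - f‖₂² over all x ∈ ℝⁿ satisfying x_i ≥ 0 for all i and Σ_{i=1}^n x_i = Σ_{i=1}^n f_i; that is, for every such feasible x, (1/2)‖r x̃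 - p∘f‖₂² + β‖x̃ - f‖₂² ≤ (1/2)‖r x - p∘f‖₂² + β‖x - f‖₂². -/
/-- The closed-form solution `x̃` minimizes `(1/2)‖r x - p∘f‖₂² + β‖x - f‖₂²` over all
feasible `x` (nonnegative entries, same entry sum as `f`). -/
theorem smoothing_solution_optimal (n : ℕ) (hn : 1 ≤ n)
    (f p : Fin n → ℝ) (r β : ℝ)
    (hf : ∀ i, 0 ≤ f i) (hp0 : ∀ i, 0 ≤ p i) (hpr : ∀ i, p i ≤ r)
    (hr : 0 < r) (hβ : 0 < β)
    (xt : Fin n → ℝ)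
    (hxt : ∀ i, xt i = ((r * p i + 2 * β) / (r ^ 2 + 2 * β)) * f i +
      (r * ∑ j, (r * f j - p j * f j)) / (n * (r ^ 2 + 2 * β))) :
    ∀ x : Fin n → ℝ, (∀ i, 0 ≤ x i) → ∑ i, x i = ∑ i, f i →
      (1 / 2) * ∑ i, (r * xt i - p i * f i) ^ 2 + β * ∑ i, (xt i - f i) ^ 2 ≤
        (1 / 2) * ∑ i, (r * x i - p i * f i) ^ 2 + β * ∑ i, (x i - f i) ^ 2 := by
  intro x hx hsum
  have hn' : (0:ℝ) < n := by exact_mod_cast hn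
  set D : ℝ := r ^ 2 + 2 * β with hDdef
  have hD : (0:ℝ) < D := by positivity
  set S : ℝ := ∑ j, (r * f j - p j * f j) with hS
  have hkey : ∀ i, D * xt i = (r * p i + 2 * β) * f i + r * S / n := by
    intro i
    rw [hxt i]
    field_simp
  have hsumxt : ∑ i, xt i = ∑ i, f i := by
    have h1 : D * ∑ i, xt i = D * ∑ i, f i := by
      rw [Finset.mul_sum, Finset.mul_sum]
      calc ∑ i, D * xt i = ∑ i, ((r * p i + 2 * β) * f i + r * S / n) :=
            Finset.sum_congr rfl fun i _ => hkey i
        _ = (∑ i, (r * p i + 2 * β) * f i) + n * (r * S / n) := by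
            rw [Finset.sum_add_distrib, Finset.sum_const, Finset.card_fin,
              nsmul_eq_mul]
        _ = (∑ i, (r * p i + 2 * β) * f i) + r * S := by
            field_simp
        _ = (∑ i, (r * p i + 2 * β) * f i) + ∑ j, r * (r * f j - p j * f j) := by
            rw [hS, Finset.mul_sum]
        _ = ∑ i, D * f i := by
            rw [← Finset.sum_add_distrib]
            exact Finset.sum_congr rfl fun i _ => by rw [hDdef]; ring
    exact mul_left_cancel₀ hD.ne' h1
  have hdiff : ∑ i, (x i - xt i) = 0 := by
    rw [Finset.sum_sub_distrib, hsum, hsumxt, sub_self]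
  have per : ∀ i ∈ Finset.univ, (1 / 2) * (r * x i - p i * f i) ^ 2 + β * (x i - f i) ^ 2
      = ((1 / 2) * (r * xt i - p i * f i) ^ 2 + β * (xt i - f i) ^ 2
        + (r * S / n) * (x i - xt i) + (D / 2) * (x i - xt i) ^ 2) := by
    intro i _
    linear_combination (x i - xt i) * hkey i
  have hsq : 0 ≤ ∑ i, (x i - xt i) ^ 2 :=
    Finset.sum_nonneg fun i _ => sq_nonneg _
  have expand : (1 / 2) * ∑ i, (r * x i - p i * f i) ^ 2 + β * ∑ i, (x i - f i) ^ 2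
      = (1 / 2) * ∑ i, (r * xt i - p i * f i) ^ 2 + β * ∑ i, (xt i - f i) ^ 2
        + (r * S / n) * ∑ i, (x i - xt i) + (D / 2) * ∑ i, (x i - xt i) ^ 2 := by
    simp only [Finset.mul_sum, ← Finset.sum_add_distrib]
    exact Finset.sum_congr rfl per
  rw [expand, hdiff, mul_zero, add_zero]
  nlinarith [mul_nonneg (le_of_lt (half_pos hD)) hsq]
end

section
/- Let W ∈ ℝ^{n×n} be symmetric with nonnegative entries and positive row sums, D the diagonal matrix with D_{ii} = Σ_j W_{ij}, and S = D^{-1/2} W D^{-1/2}. Then for every F ∈ ℝ^{n×n}, the smoothness term (1/4) Σ_{k=1}^n Σ_{i,j=1}^n [ W_{ij} (F_{ki}/√D_{ii} - F_{kj}/√D_{jj})² + W_{ij} (F_{ik}/√D_{ii} - F_{jk}/√D_{jj})² ] equals vec(F)ᵀ (𝕀 - (1/2)(S ⊗ I) - (1/2)(I ⊗ S)) vec(F). -/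
open Matrix Kronecker

set_option maxHeartbeats 1000000 in
/-- The bidirectional smoothness term equals the quadratic form
`vec(F)ᵀ (𝕀 - (1/2)(S ⊗ I) - (1/2)(I ⊗ S)) vec(F)`. -/
theorem smoothness_term_eq_quadratic_form (n : ℕ) (W : Matrix (Fin n) (Fin n) ℝ)
    (hsym : Wᵀ = W) (hW : ∀ i j, 0 ≤ W i j) (hrow : ∀ i, 0 < ∑ j, W i j) :
    ∀ F : Matrix (Fin n) (Fin n) ℝ,
      (1 / 4 : ℝ) * ∑ k, ∑ i, ∑ j,
        (W i j * (F k i / Real.sqrt (∑ j', W i j') - F k j / Real.sqrt (∑ j', W j j')) ^ 2 +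
         W i j * (F i k / Real.sqrt (∑ j', W i j') - F j k / Real.sqrt (∑ j', W j j')) ^ 2) =
      vecM n F ⬝ᵥ (((1 : Matrix (Fin n × Fin n) (Fin n × Fin n) ℝ) -
        (2 : ℝ)⁻¹ • (normMat n W ⊗ₖ (1 : Matrix (Fin n) (Fin n) ℝ)) -
        (2 : ℝ)⁻¹ • ((1 : Matrix (Fin n) (Fin n) ℝ) ⊗ₖ normMat n W)).mulVec (vecM n F)) := by
  intro F
  have hWs : ∀ i j, W i j = W j i := fun i j => (congrFun (congrFun hsym i) j).symm
  have hd0 : ∀ i, Real.sqrt (∑ j, W i j) ≠ 0 :=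
    fun i => ne_of_gt (Real.sqrt_pos.mpr (hrow i))
  have hdsq : ∀ i, Real.sqrt (∑ j, W i j) * Real.sqrt (∑ j, W i j) = ∑ j, W i j :=
    fun i => Real.mul_self_sqrt (hrow i).le
  -- the RHS equals A - B1 - B2
  have hR : vecM n F ⬝ᵥ (((1 : Matrix (Fin n × Fin n) (Fin n × Fin n) ℝ) -
        (2 : ℝ)⁻¹ • (normMat n W ⊗ₖ (1 : Matrix (Fin n) (Fin n) ℝ)) -
        (2 : ℝ)⁻¹ • ((1 : Matrix (Fin n) (Fin n) ℝ) ⊗ₖ normMat n W)).mulVec (vecM n F))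
      = (∑ i, ∑ k, F k i * F k i)
        - (∑ i, ∑ k, ∑ j, 2⁻¹ * ((Real.sqrt (∑ j', W i j'))⁻¹ * W i j *
            (Real.sqrt (∑ j', W j j'))⁻¹ * (F k i * F k j)))
        - (∑ i, ∑ k, ∑ l, 2⁻¹ * ((Real.sqrt (∑ j', W k j'))⁻¹ * W k l *
            (Real.sqrt (∑ j', W l j'))⁻¹ * (F k i * F l i))) := by
    simp only [vecM, normMat, dotProduct, mulVec, Matrix.sub_apply, Matrix.smul_apply,
      Matrix.one_apply, Matrix.kroneckerMap_apply, Matrix.diagonal_mul, Matrix.mul_diagonal,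
      Fintype.sum_prod_type, smul_eq_mul, Prod.mk.injEq, ite_and, sub_mul, mul_sub,
      ite_mul, mul_ite, one_mul, zero_mul, mul_one, mul_zero,
      Finset.sum_sub_distrib, Finset.mul_sum, Finset.sum_ite_eq, Finset.sum_ite_eq',
      Finset.mem_univ, if_true, Finset.sum_ite_irrel, Finset.sum_const_zero]
    congr 1
    · congr 1
      refine Finset.sum_congr rfl fun a _ => Finset.sum_congr rfl fun b _ =>
        Finset.sum_congr rfl fun c _ => by ring
    · refine Finset.sum_congr rfl fun a _ => Finset.sum_congr rfl fun b _ =>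
        Finset.sum_congr rfl fun c _ => by ring
  rw [hR]
  have hcol : ∀ j, (∑ i, W i j)
      = Real.sqrt (∑ j', W j j') * Real.sqrt (∑ j', W j j') := fun j => by
    rw [hdsq j]; exact Finset.sum_congr rfl fun i _ => hWs i j
  -- generic evaluations of the four square sums
  have hP : ∀ G : Matrix (Fin n) (Fin n) ℝ,
      (∑ k, ∑ i, ∑ j, W i j * (G k i / Real.sqrt (∑ j', W i j')) ^ 2)
        = ∑ i, ∑ k, G k i * G k i := by
    intro G
    calc (∑ k, ∑ i, ∑ j, W i j * (G k i / Real.sqrt (∑ j', W i j')) ^ 2)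
        = ∑ k, ∑ i, G k i * G k i := by
          refine Finset.sum_congr rfl fun k _ => Finset.sum_congr rfl fun i _ => ?_
          rw [← Finset.sum_mul, ← hdsq i]
          have := hd0 i
          field_simp
          rw [Real.sqrt_sq (Real.sqrt_nonneg _)]
          ring
      _ = ∑ i, ∑ k, G k i * G k i := Finset.sum_comm
  have hP2 : ∀ G : Matrix (Fin n) (Fin n) ℝ,
      (∑ k, ∑ i, ∑ j, W i j * (G k j / Real.sqrt (∑ j', W j j')) ^ 2)
        = ∑ i, ∑ k, G k i * G k i := by
    intro G
    calc (∑ k, ∑ i, ∑ j, W i j * (G k j / Real.sqrt (∑ j', W j j')) ^ 2)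
        = ∑ k, ∑ j, ∑ i, W i j * (G k j / Real.sqrt (∑ j', W j j')) ^ 2 :=
          Finset.sum_congr rfl fun k _ => Finset.sum_comm
      _ = ∑ k, ∑ j, G k j * G k j := by
          refine Finset.sum_congr rfl fun k _ => Finset.sum_congr rfl fun j _ => ?_
          rw [← Finset.sum_mul, hcol j]
          have := hd0 j
          field_simp
      _ = ∑ j, ∑ k, G k j * G k j := Finset.sum_comm
  have key : ∀ k i j : Fin n,
      (W i j * (F k i / Real.sqrt (∑ j', W i j') - F k j / Real.sqrt (∑ j', W j j')) ^ 2 +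
       W i j * (F i k / Real.sqrt (∑ j', W i j') - F j k / Real.sqrt (∑ j', W j j')) ^ 2)
      = W i j * (F k i / Real.sqrt (∑ j', W i j')) ^ 2
        + W i j * (F k j / Real.sqrt (∑ j', W j j')) ^ 2
        + W i j * (F i k / Real.sqrt (∑ j', W i j')) ^ 2
        + W i j * (F j k / Real.sqrt (∑ j', W j j')) ^ 2
        - 2 * ((Real.sqrt (∑ j', W i j'))⁻¹ * W i j * (Real.sqrt (∑ j', W j j'))⁻¹ *
            (F k i * F k j))
        - 2 * ((Real.sqrt (∑ j', W i j'))⁻¹ * W i j * (Real.sqrt (∑ j', W j j'))⁻¹ *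
            (F i k * F j k)) := by
    intro k i j; ring
  have e1 : (∑ k : Fin n, ∑ i, ∑ j, (Real.sqrt (∑ j', W i j'))⁻¹ * W i j *
        (Real.sqrt (∑ j', W j j'))⁻¹ * (F k i * F k j))
      = 2 * ∑ i, ∑ k, ∑ j, 2⁻¹ * ((Real.sqrt (∑ j', W i j'))⁻¹ * W i j *
        (Real.sqrt (∑ j', W j j'))⁻¹ * (F k i * F k j)) := by
    calc (∑ k : Fin n, ∑ i, ∑ j, (Real.sqrt (∑ j', W i j'))⁻¹ * W i j *
          (Real.sqrt (∑ j', W j j'))⁻¹ * (F k i * F k j))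
        = ∑ i : Fin n, ∑ k, ∑ j, (Real.sqrt (∑ j', W i j'))⁻¹ * W i j *
          (Real.sqrt (∑ j', W j j'))⁻¹ * (F k i * F k j) := Finset.sum_comm
      _ = _ := by
          simp only [Finset.mul_sum]
          exact Finset.sum_congr rfl fun a _ => Finset.sum_congr rfl fun b _ =>
            Finset.sum_congr rfl fun c _ => by ring
  have e2 : (∑ k : Fin n, ∑ i, ∑ j, (Real.sqrt (∑ j', W i j'))⁻¹ * W i j *
        (Real.sqrt (∑ j', W j j'))⁻¹ * (F i k * F j k))
      = 2 * ∑ i, ∑ k, ∑ l, 2⁻¹ * ((Real.sqrt (∑ j', W k j'))⁻¹ * W k l *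
        (Real.sqrt (∑ j', W l j'))⁻¹ * (F k i * F l i)) := by
    simp only [Finset.mul_sum]
    exact Finset.sum_congr rfl fun a _ => Finset.sum_congr rfl fun b _ =>
      Finset.sum_congr rfl fun c _ => by ring
  calc (1 / 4 : ℝ) * ∑ k, ∑ i, ∑ j,
        (W i j * (F k i / Real.sqrt (∑ j', W i j') - F k j / Real.sqrt (∑ j', W j j')) ^ 2 +
         W i j * (F i k / Real.sqrt (∑ j', W i j') - F j k / Real.sqrt (∑ j', W j j')) ^ 2)
      = (1 / 4 : ℝ) * ((∑ k, ∑ i, ∑ j, W i j * (F k i / Real.sqrt (∑ j', W i j')) ^ 2)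
          + (∑ k, ∑ i, ∑ j, W i j * (F k j / Real.sqrt (∑ j', W j j')) ^ 2)
          + (∑ k, ∑ i, ∑ j, W i j * (F i k / Real.sqrt (∑ j', W i j')) ^ 2)
          + (∑ k, ∑ i, ∑ j, W i j * (F j k / Real.sqrt (∑ j', W j j')) ^ 2)
          - 2 * (∑ k, ∑ i, ∑ j, (Real.sqrt (∑ j', W i j'))⁻¹ * W i j *
              (Real.sqrt (∑ j', W j j'))⁻¹ * (F k i * F k j))
          - 2 * (∑ k, ∑ i, ∑ j, (Real.sqrt (∑ j', W i j'))⁻¹ * W i j *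
              (Real.sqrt (∑ j', W j j'))⁻¹ * (F i k * F j k))) := by
        rw [Finset.sum_congr rfl fun k _ => Finset.sum_congr rfl fun i _ =>
          Finset.sum_congr rfl fun j _ => key k i j]
        simp only [Finset.sum_add_distrib, Finset.sum_sub_distrib, ← Finset.mul_sum]
    _ = _ := by
        rw [hP F, hP2 F, hP (fun k i => F i k), hP2 (fun k i => F i k), e1, e2]
        have h4 : (∑ i : Fin n, ∑ k : Fin n, F i k * F i k)
            = ∑ i, ∑ k, F k i * F k i := Finset.sum_comm
        rw [h4]
        ring
end
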